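/- Let K be a subfield of F, let α ∈ K^n have pairwise distinct entries, and assume that η_j ∉ K for every j = 1,…,ℓ. Then the K-subfield subcode of the twisted Reed–Solomon code satisfies TRS_{k,n}[α,t,h,η] ∩ K^n = span_K{ ev_α(X^i) : i ∈ I }, where I = {0,1,…,k−1} ∖ {h_1,…,h_ℓ}. -/

import Mathlib

open Polynomial

/-- Evaluation vector: `ev_α(f) = (f(α₁),…,f(α_n))`. -/
noncomputable def evalVec {F : Type*} [Field F] {n : ℕ} (α : Fin n → F) (f : F[X]) :
    Fin n → F :=
  fun i => f.eval (α i)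

/-- The twisted polynomial with coefficient vector `u`:
`Σ_{i=0}^{k−1} u_i X^i + Σ_{j=1}^{ℓ} η_j u_{h_j} X^{k−1+t_j}`. -/
noncomputable def twistedPoly {F : Type*} [Field F] (k ℓ : ℕ) (t : Fin ℓ → ℕ)
    (h : Fin ℓ → Fin k) (η : Fin ℓ → F) (u : Fin k → F) : F[X] :=
  (∑ i : Fin k, Polynomial.C (u i) * Polynomial.X ^ (i : ℕ))
    + ∑ j : Fin ℓ, Polynomial.C (η j * u (h j)) * Polynomial.X ^ (k - 1 + t j)

/-- The space of twisted polynomials `P_{k,n}[t,h,η]`. -/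
def twistedPolySet (F : Type*) [Field F] (k ℓ : ℕ) (t : Fin ℓ → ℕ)
    (h : Fin ℓ → Fin k) (η : Fin ℓ → F) : Set F[X] :=
  { p | ∃ u : Fin k → F, p = twistedPoly k ℓ t h η u }

/-- The twisted Reed–Solomon code `TRS_{k,n}[α,t,h,η]`, as a subset of `F^n`. -/
def TRS {F : Type*} [Field F] {n : ℕ} (α : Fin n → F) (k ℓ : ℕ) (t : Fin ℓ → ℕ)
    (h : Fin ℓ → Fin k) (η : Fin ℓ → F) : Set (Fin n → F) :=
  { c | ∃ u : Fin k → F, c = evalVec α (twistedPoly k ℓ t h η u) }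

/-- The Reed–Solomon code `RS_{k,n}[α]`, as a subset of `F^n`. -/
def RS {F : Type*} [Field F] {n : ℕ} (α : Fin n → F) (k : ℕ) : Set (Fin n → F) :=
  { c | ∃ f : F[X], f.degree ≤ ((k - 1 : ℕ) : WithBot ℕ) ∧ c = evalVec α f }

/-!
A twisted polynomial has degree `< n`, so a codeword in `K^n` is the Lagrange interpolant over `K`
of its values at the `n` distinct points `α_i ∈ K`; hence all its coefficients lie in `K`. The
coefficient of `X^i` is `u_i` and that of `X^(k-1+t_j)` is `η_j u_{h_j}`, so `η_j ∉ K` forces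
`u_{h_j} = 0`: the codeword is the evaluation of an untwisted polynomial with `K`-coefficients
supported on `I`.
-/

theorem Subfield.eq_zero_of_mul_mem {F : Type*} [Field F] (K : Subfield F) {a b : F}
    (ha : a ∉ K) (hb : b ∈ K) (hab : a * b ∈ K) : b = 0 := by
  by_contra hb0
  exact ha (by simpa [hb0] using K.mul_mem hab (K.inv_mem hb))

theorem Polynomial.coeff_mem_of_eval_mem {F ι : Type*} [Field F] [Fintype ι] (K : Subfield F)
    {v : ι → F} (hv : Function.Injective v) (hvK : ∀ i, v i ∈ K) {f : F[X]}
    (hdeg : f.degree < Fintype.card ι) (heval : ∀ i, f.eval (v i) ∈ K) (m : ℕ) :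
    f.coeff m ∈ K := by
  classical
  let w : ι → K := fun i => ⟨v i, hvK i⟩
  have hw : Set.InjOn w (Finset.univ : Finset ι) := fun i _ j _ hij => hv congr($hij.1)
  let g : K[X] := Lagrange.interpolate Finset.univ w fun i => ⟨f.eval (v i), heval i⟩
  have hfg : f = g.map K.subtype := by
    refine Polynomial.eq_of_degrees_lt_of_eval_index_eq Finset.univ hv.injOn
      (by simpa using hdeg)
      ((degree_map_le).trans_lt (Lagrange.degree_interpolate_lt _ hw)) fun i _ => ?_
    change _ = eval (K.subtype (w i)) _
    rw [eval_map, eval₂_at_apply, Lagrange.eval_interpolate_at_node _ hw (Finset.mem_univ i)]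
    rfl
  rw [hfg, coeff_map]
  exact (g.coeff m).2

section TwistedPoly

variable {F : Type*} [Field F] {k ℓ : ℕ} {t : Fin ℓ → ℕ} {h : Fin ℓ → Fin k} {η : Fin ℓ → F}

theorem coeff_twistedPoly (u : Fin k → F) (m : ℕ) :
    (twistedPoly k ℓ t h η u).coeff m =
      (∑ i : Fin k, if m = i then u i else 0) +
        ∑ j : Fin ℓ, if m = k - 1 + t j then η j * u (h j) else 0 := by
  simp only [twistedPoly, coeff_add, finsetSum_coeff, coeff_C_mul, coeff_X_pow, mul_ite,
    mul_one, mul_zero]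

theorem coeff_twistedPoly_of_lt (ht : ∀ j, 1 ≤ t j) (u : Fin k → F) (i : Fin k) :
    (twistedPoly k ℓ t h η u).coeff i = u i := by
  rw [coeff_twistedPoly, add_eq_left.mpr
    (Finset.sum_eq_zero fun j _ => if_neg (by have := ht j; omega))]
  simp [Fin.val_eq_val]

theorem coeff_twistedPoly_twist (ht : ∀ j, 1 ≤ t j) (htinj : Function.Injective t)
    (u : Fin k → F) (j : Fin ℓ) :
    (twistedPoly k ℓ t h η u).coeff (k - 1 + t j) = η j * u (h j) := by
  rw [coeff_twistedPoly, Finset.sum_eq_zero fun i _ => if_neg (by have := ht j; omega),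
    zero_add, Finset.sum_eq_single_of_mem j (Finset.mem_univ j) fun j' _ hj' =>
      if_neg fun hjj' => hj' (htinj (by omega)).symm, if_pos rfl]

theorem degree_twistedPoly_lt {n : ℕ} (hkn : k ≤ n) (ht : ∀ j, t j ≤ n - k) (u : Fin k → F) :
    (twistedPoly k ℓ t h η u).degree < n := by
  refine degree_lt_iff_coeff_zero _ _ |>.mpr fun m hm => ?_
  have hnm : n ≤ m := by exact_mod_cast hm
  rw [coeff_twistedPoly, Finset.sum_eq_zero fun i _ => if_neg (by omega),
    Finset.sum_eq_zero fun j _ => if_neg (by have := ht j; have := (h j).isLt; omega),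
    add_zero]

theorem twistedPoly_eq_sum_of_forall_eq_zero {u : Fin k → F} (hu : ∀ j, u (h j) = 0) :
    twistedPoly k ℓ t h η u = ∑ i : Fin k, C (u i) * X ^ (i : ℕ) := by
  simp [twistedPoly, hu]

theorem twistedPoly_single {i : Fin k} (hi : ∀ j, h j ≠ i) :
    twistedPoly k ℓ t h η (Pi.single i 1) = X ^ (i : ℕ) := by
  simp [twistedPoly, Pi.single_apply, hi]

variable (k ℓ t h η) in
noncomputable def twistedPolyₗ : (Fin k → F) →ₗ[F] F[X] where
  toFun := twistedPoly k ℓ t h η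
  map_add' u v := by
    simp only [twistedPoly, Pi.add_apply, mul_add, map_add, add_mul, Finset.sum_add_distrib]
    ring
  map_smul' c u := by
    simp only [twistedPoly, Pi.smul_apply, smul_eq_mul, RingHom.id_apply, smul_eq_C_mul,
      mul_add, Finset.mul_sum, C_mul, mul_assoc, mul_left_comm (C c)]

end TwistedPoly

section Code

variable {F : Type*} [Field F] {n : ℕ}

variable (n) in
def Subfield.piSubmodule (K : Subfield F) : Submodule K (Fin n → F) where
  carrier := {v | ∀ i, v i ∈ K}
  add_mem' hv hw i := K.add_mem (hv i) (hw i)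
  zero_mem' _ := K.zero_mem
  smul_mem' c _ hv i := K.mul_mem c.2 (hv i)

noncomputable def evalVecₗ (α : Fin n → F) : F[X] →ₗ[F] Fin n → F :=
  LinearMap.pi fun i => leval (α i)

theorem evalVecₗ_apply (α : Fin n → F) (f : F[X]) : evalVecₗ α f = evalVec α f := rfl

theorem TRS_eq_range (α : Fin n → F) (k ℓ : ℕ) (t : Fin ℓ → ℕ) (h : Fin ℓ → Fin k)
    (η : Fin ℓ → F) :
    TRS α k ℓ t h η = LinearMap.range (evalVecₗ α ∘ₗ twistedPolyₗ k ℓ t h η) := by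
  ext c
  simp [TRS, evalVecₗ_apply, twistedPolyₗ, eq_comm]

theorem evalVec_X_pow_mem_TRS (α : Fin n → F) {k ℓ : ℕ} (t : Fin ℓ → ℕ) {h : Fin ℓ → Fin k}
    (η : Fin ℓ → F) {i : ℕ} (hik : i < k) (hih : ∀ j, (h j : ℕ) ≠ i) :
    evalVec α (X ^ i) ∈ TRS α k ℓ t h η :=
  ⟨Pi.single ⟨i, hik⟩ 1, by rw [twistedPoly_single fun j hj => hih j (by rw [hj])]⟩

theorem evalVec_X_pow_mem_piSubmodule (K : Subfield F) {α : Fin n → F} (hαK : ∀ i, α i ∈ K)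
    (i : ℕ) : evalVec α (X ^ i) ∈ K.piSubmodule n := fun m => by
  simpa [evalVec] using K.pow_mem (hαK m) i

theorem evalVec_sum_mem_span (K : Subfield F) (α : Fin n → F) {k : ℕ} {s : Finset ℕ}
    {u : Fin k → F} (hu : ∀ i, u i ∈ K) (hs : ∀ i : Fin k, u i ≠ 0 → (i : ℕ) ∈ s) :
    evalVec α (∑ i, C (u i) * X ^ (i : ℕ)) ∈
      Submodule.span K {w | ∃ i ∈ s, w = evalVec α (X ^ i)} := by
  rw [← evalVecₗ_apply, map_sum]
  refine Submodule.sum_mem _ fun i _ => ?_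
  rw [← smul_eq_C_mul, map_smul, evalVecₗ_apply]
  by_cases hui : u i = 0
  · simp [hui]
  · exact Submodule.smul_mem _ (⟨u i, hu i⟩ : K) (Submodule.subset_span ⟨i, hs i hui, rfl⟩)

end Code

theorem subfieldSubcode_TRS_eq_span_general
    {F : Type*} [Field F] {n k ℓ : ℕ}
    (hkn : k ≤ n)
    (t : Fin ℓ → ℕ) (htinj : Function.Injective t)
    (htr : ∀ j, 1 ≤ t j ∧ t j ≤ n - k)
    (h : Fin ℓ → Fin k)
    (η : Fin ℓ → F)
    (K : Subfield F)
    (α : Fin n → F) (hαK : ∀ i, α i ∈ K) (hα : Function.Injective α)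
    (hηK : ∀ j, η j ∉ K) :
    TRS α k ℓ t h η ∩ { v | ∀ i, v i ∈ K }
      = (Submodule.span K { w : Fin n → F |
          ∃ i ∈ Finset.range k \ Finset.image (fun j => ((h j : ℕ))) Finset.univ,
            w = evalVec α (Polynomial.X ^ i) } : Submodule K (Fin n → F)) := by
  have ht : ∀ j, 1 ≤ t j := fun j => (htr j).1
  refine subset_antisymm ?_ ?_
  · rintro _ ⟨⟨u, rfl⟩, hcK⟩
    have hcoeff := (twistedPoly k ℓ t h η u).coeff_mem_of_eval_mem K hα hαK
      (by simpa using degree_twistedPoly_lt hkn (fun j => (htr j).2) u) hcK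
    have hu (i : Fin k) : u i ∈ K := coeff_twistedPoly_of_lt ht u i ▸ hcoeff i
    have hhook (j : Fin ℓ) : u (h j) = 0 :=
      K.eq_zero_of_mul_mem (hηK j) (hu _) (coeff_twistedPoly_twist ht htinj u j ▸ hcoeff _)
    rw [twistedPoly_eq_sum_of_forall_eq_zero hhook]
    refine evalVec_sum_mem_span K α hu fun i hui => ?_
    simp only [Finset.mem_sdiff, Finset.mem_range, Finset.mem_image, Finset.mem_univ, true_and,
      not_exists, i.isLt]
    exact fun j hj => hui (Fin.ext hj ▸ hhook j)
  · rw [TRS_eq_range]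
    refine Submodule.span_le (p := (LinearMap.range _).restrictScalars K ⊓ K.piSubmodule n)
      |>.mpr ?_
    rintro _ ⟨i, hi, rfl⟩
    simp only [Finset.mem_sdiff, Finset.mem_range, Finset.mem_image, Finset.mem_univ, true_and,
      not_exists] at hi
    refine ⟨?_, evalVec_X_pow_mem_piSubmodule K hαK i⟩
    exact TRS_eq_range α k ℓ t h η ▸ evalVec_X_pow_mem_TRS α t η hi.1 hi.2

/-- Proposition on subfield subcodes: if α ∈ K^n has pairwise distinct
entries and η_j ∉ K for all j, then
TRS_{k,n}[α,t,h,η] ∩ K^n = span_K{ ev_α(X^i) : i ∈ I }, I = {0,…,k−1} ∖ {h_1,…,h_ℓ}. -/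
theorem subfieldSubcode_TRS_eq_span
    {F : Type*} [Field F] {n k ℓ : ℕ}
    (hk : 1 ≤ k) (hkn : k ≤ n) (hℓ : 1 ≤ ℓ)
    (t : Fin ℓ → ℕ) (htinj : Function.Injective t)
    (htr : ∀ j, 1 ≤ t j ∧ t j ≤ n - k)
    (h : Fin ℓ → Fin k) (hhinj : Function.Injective h)
    (η : Fin ℓ → F) (hη : ∀ j, η j ≠ 0)
    (K : Subfield F)
    (α : Fin n → F) (hαK : ∀ i, α i ∈ K) (hα : Function.Injective α)
    (hηK : ∀ j, η j ∉ K) :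
    TRS α k ℓ t h η ∩ { v | ∀ i, v i ∈ K }
      = (Submodule.span K { w : Fin n → F |
          ∃ i ∈ Finset.range k \ Finset.image (fun j => ((h j : ℕ))) Finset.univ,
            w = evalVec α (Polynomial.X ^ i) } : Submodule K (Fin n → F)) :=
  subfieldSubcode_TRS_eq_span_general hkn t htinj htr h η K α hαK hα hηK
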